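/- Sobol' pick-freeze identity: with X' the input vector where all coordinates except the i-th are resampled independently (X'_i = X_i, and X'_j independent copies of X_j for j ≠ i), one has Cov(f(X), f(X')) = Var(E[f(X)|X_i]), hence the first-order Sobol' index equals S_i = Cov(f(X), f(X'))/Var(f(X)). -/

import Mathlib

/-!
Write `Y = h (Xᵢ, V)` and `Y' = h (Xᵢ, V')`, where `V` and `V'` collect the coordinates other
than `i` of `X` and of its resampled copy. As `Xᵢ`, `V`, `V'` are independent and `V`, `V'` have
the same law `ν`, conditioning on `Xᵢ` integrates the other coordinates out:
`E[Y | Xᵢ] = E[Y' | Xᵢ] = g Xᵢ` with `g t = ∫ h (t, v) dν`, and `E[Y Y' | Xᵢ] = (g Xᵢ)²` by Fubini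
on `ν ⊗ ν`. Taking expectations, `Cov(Y, Y') = E[(g Xᵢ)²] - E[g Xᵢ]² = Var(E[Y | Xᵢ])`.
-/

open MeasureTheory ProbabilityTheory

lemma measurable_funSplitAt_symm {ι γ : Type*} [DecidableEq ι] [MeasurableSpace γ] (i : ι) :
    Measurable (Equiv.funSplitAt i γ).symm := by
  refine measurable_pi_lambda _ fun j => ?_
  simp only [Equiv.funSplitAt_symm_apply]
  split
  · exact measurable_fst
  · exact (measurable_pi_apply _).comp measurable_snd

namespace ProbabilityTheory

variable {Ω α β : Type*} {mΩ : MeasurableSpace Ω} {mα : MeasurableSpace α}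
  {mβ : MeasurableSpace β} {μ : Measure Ω}

lemma iIndepFun.indepFun_of_disjoint_range {κ ι ι' : Type*} [Finite ι] [Finite ι']
    {γ : κ → Type*} {mγ : ∀ k, MeasurableSpace (γ k)} {Z : ∀ k, Ω → γ k}
    (hZ : iIndepFun Z μ) (hZm : ∀ k, Measurable (Z k)) {e : ι → κ} {e' : ι' → κ}
    (he : Disjoint (Set.range e) (Set.range e')) :
    IndepFun (fun ω a => Z (e a) ω) (fun ω b => Z (e' b) ω) μ := by
  classical
  have := Fintype.ofFinite ι
  have := Fintype.ofFinite ι'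
  have hST : Disjoint (Finset.univ.image e) (Finset.univ.image e') := by
    simpa [← Finset.disjoint_coe] using he
  exact (hZ.indepFun_finset _ _ hST hZm).comp
    (measurable_pi_lambda _ fun a => measurable_pi_apply (⟨e a, by simp⟩ : Finset.univ.image e))
    (measurable_pi_lambda _ fun b => measurable_pi_apply (⟨e' b, by simp⟩ : Finset.univ.image e'))

section SumElim

variable {ι : Type*} [Fintype ι] {X W : ι → Ω → β}

lemma iIndepFun.indepFun_sumElim (hXW : iIndepFun (Sum.elim X W) μ) (hX : ∀ j, Measurable (X j))
    (hW : ∀ j, Measurable (W j)) :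
    IndepFun (fun ω j => X j ω) (fun ω j => W j ω) μ :=
  hXW.indepFun_of_disjoint_range (Sum.forall.2 ⟨hX, hW⟩) Set.isCompl_range_inl_range_inr.disjoint

lemma iIndepFun.indepFun_apply_prodMk_compl [DecidableEq ι] (hXW : iIndepFun (Sum.elim X W) μ)
    (hX : ∀ j, Measurable (X j)) (hW : ∀ j, Measurable (W j)) (i : ι) :
    IndepFun (X i) (fun ω => (fun a : {j // j ≠ i} => X a ω, fun a : {j // j ≠ i} => W a ω)) μ :=
  (hXW.indepFun_of_disjoint_range (Sum.forall.2 ⟨hX, hW⟩) (e := fun _ : Unit => .inl i)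
      (e' := Sum.elim (fun a : {j // j ≠ i} => .inl a.1) (fun a : {j // j ≠ i} => .inr a.1))
      (Set.disjoint_range_iff.2 fun _ b => by
        rcases b with ⟨j, hj⟩ | ⟨j, hj⟩ <;> simp [Ne.symm hj])).comp
    (φ := fun x : Unit → β => x ())
    (ψ := fun x : {j // j ≠ i} ⊕ {j // j ≠ i} → β => (fun a => x (.inl a), fun a => x (.inr a)))
    (measurable_pi_apply ()) (by fun_prop)

lemma iIndepFun.identDistrib_sumElim (hXW : iIndepFun (Sum.elim X W) μ)
    (hX : ∀ j, Measurable (X j)) (hW : ∀ j, Measurable (W j))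
    (hlaw : ∀ j, μ.map (W j) = μ.map (X j)) :
    IdentDistrib (fun ω j => W j ω) (fun ω j => X j ω) μ μ where
  aemeasurable_fst := (measurable_pi_lambda _ hW).aemeasurable
  aemeasurable_snd := (measurable_pi_lambda _ hX).aemeasurable
  map_eq := by
    rw [(hXW.precomp Sum.inr_injective).map_fun_eq_pi_map fun j => (hW j).aemeasurable,
      (hXW.precomp Sum.inl_injective).map_fun_eq_pi_map fun j => (hX j).aemeasurable]
    simp only [hlaw]

end SumElim

variable [IsProbabilityMeasure μ] {T : Ω → α}

lemma IndepFun.condExp_comp_prodMk_ae_eq [StandardBorelSpace β] [Nonempty β] {V : Ω → β}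
    (hTV : IndepFun T V μ) (hT : Measurable T) (hV : AEMeasurable V μ) {F : α × β → ℝ}
    (hF : StronglyMeasurable F) (hint : Integrable (fun ω => F (T ω, V ω)) μ) :
    μ[fun ω => F (T ω, V ω) | mα.comap T] =ᵐ[μ] fun ω => ∫ v, F (T ω, v) ∂(μ.map V) := by
  have hκ : condDistrib V T μ =ᵐ[μ.map T] Kernel.const α (μ.map V) :=
    condDistrib_ae_eq_of_measure_eq_compProd T hV (by
      rw [Measure.compProd_const,
        ← (indepFun_iff_map_prod_eq_prod_map_map hT.aemeasurable hV).1 hTV])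
  filter_upwards [condExp_prod_ae_eq_integral_condDistrib hT hV hF hint,
    ae_of_ae_map hT.aemeasurable hκ] with ω hcond hconst
  rw [hcond, hconst, Kernel.const_apply]

lemma IndepFun.condExp_mul_comp_prodMk_ae_eq [StandardBorelSpace β] [Nonempty β]
    {V V' : Ω → β} (hTVV' : IndepFun T (fun ω => (V ω, V' ω)) μ) (hT : Measurable T)
    (hV : Measurable V) (hV' : Measurable V') (hVV' : IndepFun V V' μ)
    (hlaw : μ.map V' = μ.map V) {h : α × β → ℝ} (hh : Measurable h)
    (hint : Integrable (fun ω => h (T ω, V ω) * h (T ω, V' ω)) μ) :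
    μ[fun ω => h (T ω, V ω) * h (T ω, V' ω) | mα.comap T] =ᵐ[μ]
      fun ω => (∫ v, h (T ω, v) ∂(μ.map V)) ^ 2 := by
  have hlaw₂ : μ.map (fun ω => (V ω, V' ω)) = (μ.map V).prod (μ.map V) := by
    rw [(indepFun_iff_map_prod_eq_prod_map_map hV.aemeasurable hV'.aemeasurable).1 hVV', hlaw]
  refine (hTVV'.condExp_comp_prodMk_ae_eq (F := fun p => h (p.1, p.2.1) * h (p.1, p.2.2)) hT
    (hV.prodMk hV').aemeasurable (by fun_prop) hint).trans (.of_forall fun ω => ?_)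
  simp only [hlaw₂, sq]
  exact integral_prod_mul (fun v => h (T ω, v)) (fun v => h (T ω, v))

lemma IndepFun.identDistrib_prodMk {V V' : Ω → β} (hTV : IndepFun T V μ) (hTV' : IndepFun T V' μ)
    (hT : AEMeasurable T μ) (hV : AEMeasurable V μ) (hV' : AEMeasurable V' μ)
    (hlaw : μ.map V' = μ.map V) :
    IdentDistrib (fun ω => (T ω, V' ω)) (fun ω => (T ω, V ω)) μ μ where
  aemeasurable_fst := hT.prodMk hV'
  aemeasurable_snd := hT.prodMk hV
  map_eq := by
    rw [(indepFun_iff_map_prod_eq_prod_map_map hT hV').1 hTV',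
      (indepFun_iff_map_prod_eq_prod_map_map hT hV).1 hTV, hlaw]

theorem covariance_pickFreeze_eq_variance_condExp [StandardBorelSpace β] [Nonempty β]
    {V V' : Ω → β} (hT : Measurable T) (hV : Measurable V) (hV' : Measurable V')
    (hTVV' : IndepFun T (fun ω => (V ω, V' ω)) μ) (hVV' : IndepFun V V' μ)
    (hlaw : μ.map V' = μ.map V) {h : α × β → ℝ} (hh : Measurable h)
    (hY : MemLp (fun ω => h (T ω, V ω)) 2 μ) :
    cov[fun ω => h (T ω, V ω), fun ω => h (T ω, V' ω); μ] =
      variance (μ[fun ω => h (T ω, V ω) | mα.comap T]) μ := by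
  set Y : Ω → ℝ := fun ω => h (T ω, V ω)
  set Y' : Ω → ℝ := fun ω => h (T ω, V' ω)
  set g : α → ℝ := fun t => ∫ v, h (t, v) ∂(μ.map V)
  have hTV : IndepFun T V μ := hTVV'.comp measurable_id measurable_fst
  have hTV' : IndepFun T V' μ := hTVV'.comp measurable_id measurable_snd
  have hY' : MemLp Y' 2 μ :=
    ((hTV.identDistrib_prodMk hTV' hT.aemeasurable hV.aemeasurable hV'.aemeasurable
      hlaw).symm.comp hh).memLp_snd hY
  have hcondY : μ[Y | mα.comap T] =ᵐ[μ] fun ω => g (T ω) :=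
    hTV.condExp_comp_prodMk_ae_eq hT hV.aemeasurable hh.stronglyMeasurable
      (hY.integrable one_le_two)
  have hcondY' : μ[Y' | mα.comap T] =ᵐ[μ] fun ω => g (T ω) := by
    simpa only [hlaw] using hTV'.condExp_comp_prodMk_ae_eq hT hV'.aemeasurable
      hh.stronglyMeasurable (hY'.integrable one_le_two)
  have hcondYY' : μ[Y * Y' | mα.comap T] =ᵐ[μ] fun ω => g (T ω) ^ 2 :=
    hTVV'.condExp_mul_comp_prodMk_ae_eq hT hV hV' hVV' hlaw hh (hY.integrable_mul hY')
  have hm : mα.comap T ≤ mΩ := hT.comap_le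
  calc cov[Y, Y'; μ]
      = μ[Y * Y'] - μ[Y] * μ[Y'] := covariance_eq_sub hY hY'
    _ = μ[μ[Y * Y' | mα.comap T]] - μ[μ[Y | mα.comap T]] * μ[μ[Y' | mα.comap T]] := by
      rw [integral_condExp hm, integral_condExp hm, integral_condExp hm]
    _ = μ[μ[Y | mα.comap T] ^ 2] - μ[μ[Y | mα.comap T]] ^ 2 := by
      congr 1
      · exact integral_congr_ae (hcondYY'.trans (hcondY.fun_comp (· ^ 2)).symm)
      · rw [sq, integral_congr_ae (hcondY'.trans hcondY.symm)]
    _ = variance (μ[Y | mα.comap T]) μ := (variance_eq_sub (hY.condExp one_le_two)).symm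

end ProbabilityTheory

theorem sobol_pick_freeze_identity_general
    {Ω : Type*} [MeasureSpace Ω] [IsProbabilityMeasure (ℙ : Measure Ω)]
    {d : ℕ} (X W : Fin d → Ω → ℝ) (i : Fin d)
    (hXmeas : ∀ j, Measurable (X j)) (hWmeas : ∀ j, Measurable (W j))
    (hindep : iIndepFun (Sum.elim X W) ℙ)
    (hWlaw : ∀ j, Measure.map (W j) ℙ = Measure.map (X j) ℙ)
    (X' : Fin d → Ω → ℝ)
    (hX' : X' = fun j => if j = i then X i else W j)
    (f : (Fin d → ℝ) → ℝ) (hf : Measurable f)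
    (Y Y' : Ω → ℝ)
    (hYdef : Y = fun ω => f (fun j => X j ω))
    (hY'def : Y' = fun ω => f (fun j => X' j ω))
    (hY2 : MemLp Y 2 ℙ) :
    (∫ ω, (Y ω - ∫ ω', Y ω' ∂ℙ) * (Y' ω - ∫ ω', Y' ω' ∂ℙ) ∂ℙ) =
      variance (ℙ[Y | MeasurableSpace.comap (X i) inferInstance]) ℙ ∧
    variance (ℙ[Y | MeasurableSpace.comap (X i) inferInstance]) ℙ / variance Y ℙ =
      (∫ ω, (Y ω - ∫ ω', Y ω' ∂ℙ) * (Y' ω - ∫ ω', Y' ω' ∂ℙ) ∂ℙ) / variance Y ℙ := by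
  let restrict : (Fin d → ℝ) → {j // j ≠ i} → ℝ := fun x a => x a
  have hrestrict : Measurable restrict := by fun_prop
  let V := fun ω => restrict fun j => X j ω
  let V' := fun ω => restrict fun j => W j ω
  have hY : Y = fun ω => f ((Equiv.funSplitAt i ℝ).symm (X i ω, V ω)) := by
    subst hYdef
    funext ω
    exact congrArg f ((Equiv.funSplitAt i ℝ).eq_symm_apply.2 rfl)
  have hY' : Y' = fun ω => f ((Equiv.funSplitAt i ℝ).symm (X i ω, V' ω)) := by
    subst hY'def hX'
    funext ω
    refine congrArg f ((Equiv.funSplitAt i ℝ).eq_symm_apply.2 (Prod.ext ?_ (funext fun a => ?_)))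
    · simp
    · simp [a.2, V', restrict]
  subst hY hY'
  have key := covariance_pickFreeze_eq_variance_condExp (hXmeas i)
    (hrestrict.comp (measurable_pi_lambda _ hXmeas)) (hrestrict.comp (measurable_pi_lambda _ hWmeas))
    (hindep.indepFun_apply_prodMk_compl hXmeas hWmeas i)
    ((hindep.indepFun_sumElim hXmeas hWmeas).comp hrestrict hrestrict)
    ((hindep.identDistrib_sumElim hXmeas hWmeas hWlaw).comp hrestrict).map_eq
    (hf.comp (measurable_funSplitAt_symm i)) hY2
  exact ⟨key, congrArg (· / variance _ ℙ) key.symm⟩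

theorem sobol_pick_freeze_identity
    {Ω : Type*} [MeasureSpace Ω] [IsProbabilityMeasure (ℙ : Measure Ω)]
    {d : ℕ} (X W : Fin d → Ω → ℝ) (i : Fin d)
    (hXmeas : ∀ j, Measurable (X j)) (hWmeas : ∀ j, Measurable (W j))
    (hindep : iIndepFun (Sum.elim X W) ℙ)
    (hWlaw : ∀ j, Measure.map (W j) ℙ = Measure.map (X j) ℙ)
    (X' : Fin d → Ω → ℝ)
    (hX' : X' = fun j => if j = i then X i else W j)
    (f : (Fin d → ℝ) → ℝ) (hf : Measurable f)
    (Y Y' : Ω → ℝ)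
    (hYdef : Y = fun ω => f (fun j => X j ω))
    (hY'def : Y' = fun ω => f (fun j => X' j ω))
    (hY2 : MemLp Y 2 ℙ) (hVar : 0 < variance Y ℙ) :
    (∫ ω, (Y ω - ∫ ω', Y ω' ∂ℙ) * (Y' ω - ∫ ω', Y' ω' ∂ℙ) ∂ℙ) =
      variance (ℙ[Y | MeasurableSpace.comap (X i) inferInstance]) ℙ ∧
    variance (ℙ[Y | MeasurableSpace.comap (X i) inferInstance]) ℙ / variance Y ℙ =
      (∫ ω, (Y ω - ∫ ω', Y ω' ∂ℙ) * (Y' ω - ∫ ω', Y' ω' ∂ℙ) ∂ℙ) / variance Y ℙ :=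
  sobol_pick_freeze_identity_general X W i hXmeas hWmeas hindep hWlaw X' hX' f hf Y Y' hYdef hY'def
    hY2
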